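/- arXiv:1507.02923 — 5 statements merged into one kernel-verified Lean document; each statement's English description precedes it below -/
import Mathlib

section
/- Let f ∈ ℂ[x1,…,xn] be an irreducible homogeneous polynomial of degree d ≥ 2, let x_r ∈ Reg(f), let t ∈ ℂ, and set u = t·∇f(x_r). Then for every nonzero λ ∈ ℂ the pair (u + λ·x_r, λ·x_r) satisfies λ·x_r ∈ Reg(f) and (u + λ·x_r) − λ·x_r ∈ ℂ·∇f(λ·x_r); consequently (u, 0) ∈ E_f, and u ∈ DS(f). -/
/-!
By homogeneity `∇f(λx) = λ^(d-1) ∇f(x)`, so for `λ ≠ 0` the point `(u + λ x_r, λ x_r)` lies on the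
ED correspondence with multiplier `t / λ^(d-1)`. As `λ → 0` this curve tends to `(u, 0)`; since
polynomials are continuous, Zariski closures contain Euclidean closures, hence `(u, 0) ∈ E_f`.
Finally `0 ∈ Sing(f)` because every partial derivative is homogeneous of degree `d - 1 ≥ 1`.
-/

open MvPolynomial Pointwise

/-- Gradient of a multivariate polynomial at a point. -/
noncomputable def grad {n : ℕ} (f : MvPolynomial (Fin n) ℂ) (x : Fin n → ℂ) : Fin n → ℂ :=
  fun i => eval x (pderiv i f)

/-- Zariski closure: zero locus of the ideal of all polynomials vanishing on `S`. -/
def zclosure {σ : Type} (S : Set (σ → ℂ)) : Set (σ → ℂ) :=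
  {x | ∀ p : MvPolynomial σ ℂ, (∀ s ∈ S, eval s p = 0) → eval x p = 0}

/-- Zero locus `V(f)`. -/
def Vp {n : ℕ} (f : MvPolynomial (Fin n) ℂ) : Set (Fin n → ℂ) := {x | eval x f = 0}

/-- Regular locus. -/
def RegL {n : ℕ} (f : MvPolynomial (Fin n) ℂ) : Set (Fin n → ℂ) :=
  {x | eval x f = 0 ∧ grad f x ≠ 0}

/-- Singular locus. -/
def SingL {n : ℕ} (f : MvPolynomial (Fin n) ℂ) : Set (Fin n → ℂ) :=
  {x | eval x f = 0 ∧ grad f x = 0}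

/-- ED correspondence: Zariski closure of pairs (u,x), x regular, u - x ∈ ℂ·∇f(x),
encoded as functions on `Fin n ⊕ Fin n`. -/
def EDcorr {n : ℕ} (f : MvPolynomial (Fin n) ℂ) : Set ((Fin n ⊕ Fin n) → ℂ) :=
  zclosure {w | ∃ u x : Fin n → ℂ, w = Sum.elim u x ∧ x ∈ RegL f ∧ ∃ t : ℂ, u - x = t • grad f x}

/-- ED data singular locus. -/
def DS {n : ℕ} (f : MvPolynomial (Fin n) ℂ) : Set (Fin n → ℂ) :=
  {u | ∃ x, Sum.elim u x ∈ EDcorr f ∧ x ∈ SingL f}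

/-- Dual variety. -/
def dualV {n : ℕ} (f : MvPolynomial (Fin n) ℂ) : Set (Fin n → ℂ) :=
  zclosure {y | ∃ (t : ℂ) (x : Fin n → ℂ), x ∈ RegL f ∧ y = t • grad f x}

/-- Isotropic quadric. -/
def isoQ (n : ℕ) : Set (Fin n → ℂ) := {x | ∑ i, (x i) ^ 2 = 0}

/-- ED data isotropic locus. -/
def DI {n : ℕ} (f : MvPolynomial (Fin n) ℂ) : Set (Fin n → ℂ) :=
  {u | ∃ x, Sum.elim u x ∈ EDcorr f ∧ x ∈ isoQ n ∩ Vp f}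

/-- Zariski-closed sets. -/
def IsZClosed {σ : Type} (S : Set (σ → ℂ)) : Prop := zclosure S = S

/-- Irreducibility with respect to Zariski-closed sets. -/
def IsZIrreducible {σ : Type} (S : Set (σ → ℂ)) : Prop :=
  S.Nonempty ∧ ∀ C₁ C₂ : Set (σ → ℂ), IsZClosed C₁ → IsZClosed C₂ →
    S ⊆ C₁ ∪ C₂ → S ⊆ C₁ ∨ S ⊆ C₂

/-- `C` is an irreducible component of `S`. -/
def IsIrredComponentOf {σ : Type} (C S : Set (σ → ℂ)) : Prop :=
  C ⊆ S ∧ IsZClosed C ∧ IsZIrreducible C ∧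
    ∀ C' : Set (σ → ℂ), IsZClosed C' → IsZIrreducible C' → C ⊆ C' → C' ⊆ S → C' = C

theorem MvPolynomial.IsHomogeneous.eval_smul {A σ : Type*} [CommSemiring A]
    {φ : MvPolynomial σ A} {m : ℕ} (hφ : φ.IsHomogeneous m) (c : A) (x : σ → A) :
    eval (c • x) φ = c ^ m * eval x φ := by
  simp only [eval_eq, Finset.mul_sum]
  refine Finset.sum_congr rfl fun e he => ?_
  simp only [Pi.smul_apply, smul_eq_mul, mul_pow, Finset.prod_mul_distrib,
    Finset.prod_pow_eq_pow_sum, ← hφ.degree_eq_sum_deg_support he]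
  ring

theorem grad_smul_of_isHomogeneous {n m : ℕ} {f : MvPolynomial (Fin n) ℂ}
    (hf : f.IsHomogeneous m) (c : ℂ) (x : Fin n → ℂ) :
    grad f (c • x) = c ^ (m - 1) • grad f x :=
  funext fun _ => hf.pderiv.eval_smul c x

theorem smul_mem_RegL_of_isHomogeneous {n m : ℕ} {f : MvPolynomial (Fin n) ℂ}
    (hf : f.IsHomogeneous m) {x : Fin n → ℂ} (hx : x ∈ RegL f) {c : ℂ} (hc : c ≠ 0) :
    c • x ∈ RegL f := by
  refine ⟨by rw [hf.eval_smul, hx.1, mul_zero], ?_⟩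
  rw [grad_smul_of_isHomogeneous hf]
  exact smul_ne_zero (pow_ne_zero _ hc) hx.2

theorem zero_mem_SingL_of_isHomogeneous {n m : ℕ} (hm : 2 ≤ m) {f : MvPolynomial (Fin n) ℂ}
    (hf : f.IsHomogeneous m) : 0 ∈ SingL f := by
  have heval := hf.eval_smul 0 0
  have hgrad := grad_smul_of_isHomogeneous hf 0 0
  rw [zero_smul, zero_pow (by omega), zero_mul] at heval
  rw [zero_smul, zero_pow (by omega), zero_smul] at hgrad
  exact ⟨heval, hgrad⟩

theorem closure_subset_zclosure {σ : Type} (S : Set (σ → ℂ)) : closure S ⊆ zclosure S := by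
  refine closure_minimal (fun s hs p hp => hp s hs) ?_
  simp only [zclosure, Set.ofPred_forall]
  exact isClosed_iInter fun p => isClosed_iInter fun _ =>
    isClosed_eq (continuous_eval p) continuous_const

theorem mem_zclosure_of_continuous_of_forall_ne_zero {σ : Type} {S : Set (σ → ℂ)} {γ : ℂ → σ → ℂ}
    (hγ : Continuous γ) (hS : ∀ c, c ≠ 0 → γ c ∈ S) : γ 0 ∈ zclosure S := by
  have h0 : (0 : ℂ) ∈ closure {0}ᶜ := by rw [(dense_compl_singleton 0).closure_eq]; trivial
  refine closure_subset_zclosure S (closure_mono ?_ (mem_closure_image hγ.continuousAt h0))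
  rintro _ ⟨c, hc, rfl⟩
  exact hS c hc

theorem dual_point_in_DS_general {n d : ℕ} (hd : 2 ≤ d) (f : MvPolynomial (Fin n) ℂ)
    (hf : f.IsHomogeneous d)
    (xr : Fin n → ℂ) (hxr : xr ∈ RegL f) (t : ℂ) (u : Fin n → ℂ)
    (hu : u = t • grad f xr) :
    (∀ lam : ℂ, lam ≠ 0 →
      lam • xr ∈ RegL f ∧ ∃ s : ℂ, (u + lam • xr) - lam • xr = s • grad f (lam • xr)) ∧
    Sum.elim u (0 : Fin n → ℂ) ∈ EDcorr f ∧
    u ∈ DS f := by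
  have hline : ∀ lam : ℂ, lam ≠ 0 →
      lam • xr ∈ RegL f ∧ ∃ s : ℂ, (u + lam • xr) - lam • xr = s • grad f (lam • xr) := by
    intro lam hlam
    refine ⟨smul_mem_RegL_of_isHomogeneous hf hxr hlam, t / lam ^ (d - 1), ?_⟩
    rw [add_sub_cancel_right, grad_smul_of_isHomogeneous hf, hu, smul_smul,
      div_mul_cancel₀ t (pow_ne_zero _ hlam)]
  have hED : Sum.elim u (0 : Fin n → ℂ) ∈ EDcorr f := by
    have hγ : Continuous fun lam : ℂ => Sum.elim (u + lam • xr) (lam • xr) := by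
      refine continuous_pi fun j => ?_
      cases j <;> simp only [Sum.elim_inl, Sum.elim_inr] <;> fun_prop
    have hS : ∀ lam : ℂ, lam ≠ 0 → Sum.elim (u + lam • xr) (lam • xr) ∈
        {w | ∃ u x : Fin n → ℂ, w = Sum.elim u x ∧ x ∈ RegL f ∧ ∃ t : ℂ, u - x = t • grad f x} :=
      fun lam hlam => ⟨u + lam • xr, lam • xr, rfl, hline lam hlam⟩
    have hγ0 := mem_zclosure_of_continuous_of_forall_ne_zero hγ hS
    simpa [EDcorr] using hγ0
  exact ⟨hline, hED, 0, hED, zero_mem_SingL_of_isHomogeneous hd hf⟩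

/-- For an irreducible homogeneous `f` of degree `d ≥ 2`, a regular point `x_r`, and
`u = t·∇f(x_r)`: for every nonzero `λ`, `λ·x_r` is regular and `(u + λ·x_r) - λ·x_r` is a
scalar multiple of `∇f(λ·x_r)`; consequently `(u, 0) ∈ E_f` and `u ∈ DS(f)`. -/
theorem dual_point_in_DS {n d : ℕ} (hd : 2 ≤ d) (f : MvPolynomial (Fin n) ℂ)
    (hf : f.IsHomogeneous d) (hirr : Irreducible f)
    (xr : Fin n → ℂ) (hxr : xr ∈ RegL f) (t : ℂ) (u : Fin n → ℂ)
    (hu : u = t • grad f xr) :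
    (∀ lam : ℂ, lam ≠ 0 →
      lam • xr ∈ RegL f ∧ ∃ s : ℂ, (u + lam • xr) - lam • xr = s • grad f (lam • xr)) ∧
    Sum.elim u (0 : Fin n → ℂ) ∈ EDcorr f ∧
    u ∈ DS f :=
  dual_point_in_DS_general hd f hf xr hxr t u hu
end

section
/- Let f ∈ ℂ[x1,…,xn] be an irreducible homogeneous polynomial of degree d ≥ 2 (so that V(f) is an irreducible affine cone that is not a linear space). Then the ED data singular locus is contained in the Minkowski sum of the dual variety and the singular locus: DS(f) ⊆ V(f)* + Sing(f), where A + B = {a + b : a ∈ A, b ∈ B}. -/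
open MvPolynomial Pointwise

lemma eval_bind₁' {σ τ : Type*} (g : σ → MvPolynomial τ ℂ) (p : MvPolynomial σ ℂ)
    (w : τ → ℂ) : eval w (bind₁ g p) = eval (fun i => eval w (g i)) p :=
  eval₂Hom_bind₁ (RingHom.id ℂ) w g p

/-- Theorem 1, inclusion (2): for an irreducible affine cone `V(f)` (with `f` irreducible
homogeneous of degree `d ≥ 2`), the ED data singular locus is contained in the Minkowski sum
of the dual variety and the singular locus. -/
theorem DS_subset_dual_add_sing {n d : ℕ} (hd : 2 ≤ d) (f : MvPolynomial (Fin n) ℂ)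
    (hf : f.IsHomogeneous d) (hirr : Irreducible f) :
    DS f ⊆ dualV f + SingL f := by
  rintro u ⟨x, hE, hx⟩
  refine Set.mem_add.2 ⟨u - x, ?_, x, hx, by abel⟩
  intro p hp
  have key := hE (bind₁ (fun i => X (Sum.inl i) - X (Sum.inr i)) p) ?_
  · have : eval (Sum.elim u x) (bind₁ (fun i => X (Sum.inl i) - X (Sum.inr i)) p)
        = eval (u - x) p := by
      rw [eval_bind₁']
      have hfun : (fun i => eval (Sum.elim u x) (X (Sum.inl i) - X (Sum.inr i))) = u - x := by
        funext i; simp [Pi.sub_apply]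
      rw [hfun]
    rwa [this] at key
  · rintro w ⟨u', x', rfl, hreg, t, ht⟩
    rw [eval_bind₁']
    have : (fun i => eval (Sum.elim u' x') (X (Sum.inl i) - X (Sum.inr i))) = u' - x' := by
      funext i; simp [Pi.sub_apply]
    rw [this]
    exact hp _ ⟨t, x', hreg, ht⟩
end

section
/- Let f ∈ ℂ[x1,…,xn] be an irreducible homogeneous polynomial of degree d ≥ 1. Then the ED data isotropic locus is contained in the Minkowski sum of the dual variety and the isotropic points of V(f): DI(f) ⊆ V(f)* + (Q ∩ V(f)), where A + B = {a + b : a ∈ A, b ∈ B}. -/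
open MvPolynomial Pointwise

/-! The difference map `(u, x) ↦ u - x` is polynomial and sends the generic pairs of the ED
correspondence into the cone `{t • ∇f(x)}` over the regular locus; polynomial maps preserve
membership in Zariski closures, so it sends `E_f` into `V(f)*`. Then `u = (u - x) + x`. -/

theorem eval_bind₁ {R σ τ : Type*} [CommSemiring R] (w : τ → R) (g : σ → MvPolynomial τ R)
    (p : MvPolynomial σ R) : eval w (bind₁ g p) = eval (fun i => eval w (g i)) p :=
  eval₂Hom_bind₁ (RingHom.id R) w g p

theorem mapsTo_zclosure {σ τ : Type} (g : τ → MvPolynomial σ ℂ) {S : Set (σ → ℂ)}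
    {T : Set (τ → ℂ)} (h : Set.MapsTo (fun s i => eval s (g i)) S T) :
    Set.MapsTo (fun s i => eval s (g i)) (zclosure S) (zclosure T) := by
  intro x hx p hp
  rw [← eval_bind₁]
  exact hx _ fun s hs => by rw [eval_bind₁]; exact hp _ (h hs)

theorem sub_mem_dualV_of_mem_EDcorr {n : ℕ} {f : MvPolynomial (Fin n) ℂ} {u x : Fin n → ℂ}
    (h : Sum.elim u x ∈ EDcorr f) : u - x ∈ dualV f := by
  have eval_diff : ∀ u x : Fin n → ℂ,
      (fun i => eval (Sum.elim u x) (X (Sum.inl i) - X (Sum.inr i))) = u - x := by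
    intro u x
    funext i
    simp
  have hcone : Set.MapsTo (fun s i => eval s (X (Sum.inl i) - X (Sum.inr i)))
      {w | ∃ u x : Fin n → ℂ, w = Sum.elim u x ∧ x ∈ RegL f ∧ ∃ t : ℂ, u - x = t • grad f x}
      {y | ∃ (t : ℂ) (x : Fin n → ℂ), x ∈ RegL f ∧ y = t • grad f x} := by
    rintro _ ⟨u', x', rfl, hreg, t, ht⟩
    exact ⟨t, x', hreg, (eval_diff u' x').trans ht⟩
  exact eval_diff u x ▸ (mapsTo_zclosure _ hcone h : _ ∈ dualV f)

theorem DI_subset_dual_add_iso_general {n : ℕ} (f : MvPolynomial (Fin n) ℂ) :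
    DI f ⊆ dualV f + (isoQ n ∩ Vp f) := by
  rintro u ⟨x, hE, hx⟩
  exact ⟨u - x, sub_mem_dualV_of_mem_EDcorr hE, x, hx, sub_add_cancel u x⟩

/-- Theorem 2, inclusion (2): for an irreducible affine cone `V(f)` (with `f` irreducible
homogeneous of degree `d ≥ 1`), the ED data isotropic locus is contained in the Minkowski sum
of the dual variety and the isotropic points of `V(f)`. -/
theorem DI_subset_dual_add_iso {n d : ℕ} (hd : 1 ≤ d) (f : MvPolynomial (Fin n) ℂ)
    (hf : f.IsHomogeneous d) (hirr : Irreducible f) :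
    DI f ⊆ dualV f + (isoQ n ∩ Vp f) :=
  DI_subset_dual_add_iso_general f
end

section
/- Let f = x1³ + x2²x3 ∈ ℂ[x1,x2,x3] (the cuspidal cubic cone). Then the dual variety V(f)*, i.e., the Zariski closure of {t·∇f(x) : t ∈ ℂ, x ∈ V(f), ∇f(x) ≠ 0}, equals V(4x1³ − 27x2²x3) = {y ∈ ℂ³ : 4y1³ − 27y2²y3 = 0}. -/
open MvPolynomial Pointwise

/-!
On `t • ∇f(x) = t (3x₁², 2x₂x₃, x₂²)` the form `4y₁³ - 27y₂²y₃` equals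
`108 t³ (x₁³ - x₂²x₃) f(x)`, which gives `⊆`. Conversely, a point `y` of the curve
`4y₁³ = 27y₂²y₃` with `y₃ ≠ 0` is `y₃ • ∇f(a, 1, -a³)` for suitable `a`, and a point with `y₃ = 0`
is `(0, y₂, 0)`, the value at `ε = 0` of the polynomial curve `ε ↦ (3c²ε², y₂, ε⁶)` with
`c³ = y₂ / 2`, all of whose other points have `y₃ ≠ 0`. A polynomial vanishing on the dual variety
then vanishes at infinitely many points of this curve, hence along all of it.
-/

section ZariskiClosure

variable {σ : Type} {S : Set (σ → ℂ)}

theorem subset_zclosure : S ⊆ zclosure S :=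
  fun s hs _ hp => hp s hs

theorem zclosure_subset_zeroLocus {p : MvPolynomial σ ℂ} (hp : ∀ s ∈ S, eval s p = 0) :
    zclosure S ⊆ {x | eval x p = 0} :=
  fun _ hx => hx p hp

theorem eval_polynomial_aeval {R : Type*} [CommSemiring R] (γ : σ → Polynomial R)
    (p : MvPolynomial σ R) (ε : R) :
    (aeval γ p).eval ε = eval (fun i => (γ i).eval ε) p := by
  rw [← Polynomial.coe_aeval_eq_eval, comp_aeval_apply]
  rfl

theorem polynomialCurve_mem_zclosure (γ : σ → Polynomial ℂ)
    (h : {ε | (fun i => (γ i).eval ε) ∈ zclosure S}.Infinite) (ε₀ : ℂ) :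
    (fun i => (γ i).eval ε₀) ∈ zclosure S := by
  intro p hp
  have hroots : aeval γ p = 0 :=
    Polynomial.eq_zero_of_infinite_isRoot _ <| h.mono fun ε hε => by
      simpa [Polynomial.IsRoot, eval_polynomial_aeval] using hε p hp
  rw [← eval_polynomial_aeval, hroots, Polynomial.eval_zero]

end ZariskiClosure

local notation "cusp" => (X 0 ^ 3 + X 1 ^ 2 * X 2 : MvPolynomial (Fin 3) ℂ)

theorem smul_grad_mem_dualV {n : ℕ} {f : MvPolynomial (Fin n) ℂ} {x : Fin n → ℂ}
    (hx : x ∈ RegL f) (t : ℂ) : t • grad f x ∈ dualV f :=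
  subset_zclosure ⟨t, x, hx, rfl⟩

theorem grad_cusp (x : Fin 3 → ℂ) :
    grad cusp x = ![3 * x 0 ^ 2, 2 * x 1 * x 2, x 1 ^ 2] := by
  funext i
  fin_cases i <;> simp [grad, pderiv_X, Derivation.leibniz, mul_comm]

theorem dualV_cusp_subset :
    dualV cusp ⊆ {y : Fin 3 → ℂ | 4 * y 0 ^ 3 - 27 * y 1 ^ 2 * y 2 = 0} := by
  have hvanish : ∀ s ∈ {y | ∃ (t : ℂ) (x : Fin 3 → ℂ), x ∈ RegL cusp ∧ y = t • grad cusp x},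
      eval s (C 4 * X 0 ^ 3 - C 27 * X 1 ^ 2 * X 2) = 0 := by
    rintro s ⟨t, x, ⟨hfx, -⟩, rfl⟩
    have hf : x 0 ^ 3 + x 1 ^ 2 * x 2 = 0 := by simpa using hfx
    simp only [grad_cusp, Matrix.smul_cons, smul_eq_mul, Matrix.smul_empty, map_sub, map_mul,
      eval_C, map_pow, eval_X, Matrix.cons_val_zero, Matrix.cons_val_one, Matrix.cons_val]
    linear_combination 108 * t ^ 3 * (x 0 ^ 3 - x 1 ^ 2 * x 2) * hf
  intro y hy
  simpa using zclosure_subset_zeroLocus hvanish hy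

theorem smul_mem_dualV_cusp (a t : ℂ) : t • ![3 * a ^ 2, -2 * a ^ 3, 1] ∈ dualV cusp := by
  have hx : ![a, 1, -a ^ 3] ∈ RegL cusp := by
    refine ⟨by simp, fun h => ?_⟩
    simpa [grad_cusp] using congrFun h 2
  simpa [grad_cusp] using smul_grad_mem_dualV hx t

theorem mem_dualV_cusp_of_ne_zero {y : Fin 3 → ℂ} (hy : 4 * y 0 ^ 3 - 27 * y 1 ^ 2 * y 2 = 0)
    (h2 : y 2 ≠ 0) : y ∈ dualV cusp := by
  obtain ⟨a, ha0, ha1⟩ : ∃ a : ℂ, y 2 * (3 * a ^ 2) = y 0 ∧ y 2 * (-2 * a ^ 3) = y 1 := by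
    by_cases h0 : y 0 = 0
    · have h1 : y 1 = 0 := by
        have : y 1 ^ 2 * y 2 = 0 := by
          linear_combination (-1 / 27 : ℂ) * hy + (4 / 27) * y 0 ^ 2 * h0
        simpa [h2] using this
      exact ⟨0, by simp [h0], by simp [h1]⟩
    · refine ⟨-3 * y 1 / (2 * y 0), ?_, ?_⟩
      · field_simp
        linear_combination -hy
      · field_simp
        linear_combination -y 1 * hy
  convert smul_mem_dualV_cusp a (y 2) using 1
  ext i
  fin_cases i <;> simp [← ha0, ← ha1]

theorem mem_dualV_cusp_of_eq_zero {y : Fin 3 → ℂ} (hy : 4 * y 0 ^ 3 - 27 * y 1 ^ 2 * y 2 = 0)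
    (h2 : y 2 = 0) : y ∈ dualV cusp := by
  have h0 : y 0 = 0 := by
    have : y 0 ^ 3 = 0 := by linear_combination (1 / 4 : ℂ) * hy + (27 / 4) * y 1 ^ 2 * h2
    exact pow_eq_zero_iff three_ne_zero |>.mp this
  obtain ⟨c, hc⟩ := IsAlgClosed.exists_pow_nat_eq (y 1 / 2) three_pos
  let γ : Fin 3 → Polynomial ℂ :=
    ![Polynomial.C (3 * c ^ 2) * Polynomial.X ^ 2, Polynomial.C (y 1), Polynomial.X ^ 6]
  have hγ : y = fun i => (γ i).eval 0 := by
    ext i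
    fin_cases i <;> simp [γ, h0, h2]
  rw [hγ]
  refine polynomialCurve_mem_zclosure γ ((Set.finite_singleton 0).infinite_compl.mono
    fun ε hε => mem_dualV_cusp_of_ne_zero ?_ (by simpa [γ] using hε)) 0
  simp only [γ, Matrix.cons_val, Polynomial.eval_mul, Polynomial.eval_C, Polynomial.eval_pow,
    Polynomial.eval_X]
  linear_combination 108 * ε ^ 6 * (c ^ 3 + y 1 / 2) * hc

/-- The dual variety of the cuspidal cubic cone `V(x₁³ + x₂²x₃)` is `V(4x₁³ - 27x₂²x₃)`. -/
theorem dual_cuspidal_cubic :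
    dualV (X 0 ^ 3 + X 1 ^ 2 * X 2 : MvPolynomial (Fin 3) ℂ) =
      {y : Fin 3 → ℂ | 4 * y 0 ^ 3 - 27 * y 1 ^ 2 * y 2 = 0} := by
  refine dualV_cusp_subset.antisymm fun y hy => ?_
  by_cases h2 : y 2 = 0
  · exact mem_dualV_cusp_of_eq_zero hy h2
  · exact mem_dualV_cusp_of_ne_zero hy h2
end

section
/- Let f = x1³ − x1x2² − x1x3² + 2x2x3x4 − x1x4² ∈ ℂ[x1,x2,x3,x4], the 3×3 symmetric determinant defining Cayley's cubic surface as a hypersurface in ℂ⁴. Then the dual variety is the quartic Steiner surface: V(f)* = V(x2²x3² − 2x1x2x3x4 + x2²x4² + x3²x4²). -/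
open MvPolynomial Pointwise

/-!
The Steiner quartic `S` vanishes along the cone `{t • ∇f x | f x = 0}`, because `S ∘ ∇f` is a
multiple of `f`; this gives `⊆`. Conversely, every zero of `S` is of the form
`σ w = (w₀² + w₁² + w₂², 2w₀w₁, 2w₀w₂, 2w₁w₂)`, and as long as `h w ≠ 0` for the Heron quartic `h`,
`σ w = (h w)⁻¹ • ∇f x` for an explicit regular point `x` of the cubic. A polynomial vanishing on the
cone then vanishes on `σ w` off the hypersurface `h = 0`, hence everywhere, because its pullback
along `σ` times `h` is the zero polynomial.
-/

theorem eval_mem_zclosure_of_forall_eval_ne_zero {σ τ : Type} {S : Set (τ → ℂ)}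
    (v : τ → MvPolynomial σ ℂ) {L : MvPolynomial σ ℂ} (hL : L ≠ 0)
    (hS : ∀ w, eval w L ≠ 0 → (fun i => eval w (v i)) ∈ S) (w : σ → ℂ) :
    (fun i => eval w (v i)) ∈ zclosure S := by
  intro p hp
  have hpull : ∀ w, eval w (bind₁ v p) = eval (fun i => eval w (v i)) p := fun w => by
    simpa using aeval_bind₁ w v p
  have hzero : bind₁ v p * L = 0 := MvPolynomial.funext fun w => by
    by_cases hw : eval w L = 0
    · simp [hw]
    · simp [hpull, hp _ (hS w hw)]
  rw [← hpull, (mul_eq_zero.mp hzero).resolve_right hL, map_zero]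

noncomputable def cayleyCubic : MvPolynomial (Fin 4) ℂ :=
  X 0 ^ 3 - X 0 * X 1 ^ 2 - X 0 * X 2 ^ 2 + 2 * X 1 * X 2 * X 3 - X 0 * X 3 ^ 2

noncomputable def steinerQuartic : MvPolynomial (Fin 4) ℂ :=
  X 1 ^ 2 * X 2 ^ 2 - 2 * X 0 * X 1 * X 2 * X 3 + X 1 ^ 2 * X 3 ^ 2 + X 2 ^ 2 * X 3 ^ 2

theorem eval_cayleyCubic (x : Fin 4 → ℂ) :
    eval x cayleyCubic =
      x 0 ^ 3 - x 0 * x 1 ^ 2 - x 0 * x 2 ^ 2 + 2 * x 1 * x 2 * x 3 - x 0 * x 3 ^ 2 := by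
  simp [cayleyCubic]

theorem eval_steinerQuartic (y : Fin 4 → ℂ) :
    eval y steinerQuartic =
      y 1 ^ 2 * y 2 ^ 2 - 2 * y 0 * y 1 * y 2 * y 3 + y 1 ^ 2 * y 3 ^ 2 + y 2 ^ 2 * y 3 ^ 2 := by
  simp [steinerQuartic]

theorem grad_cayleyCubic (x : Fin 4 → ℂ) :
    grad cayleyCubic x = ![3 * x 0 ^ 2 - x 1 ^ 2 - x 2 ^ 2 - x 3 ^ 2, 2 * (x 2 * x 3 - x 0 * x 1),
      2 * (x 1 * x 3 - x 0 * x 2), 2 * (x 1 * x 2 - x 0 * x 3)] := by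
  have h2 : (2 : MvPolynomial (Fin 4) ℂ) = C 2 := rfl
  funext i
  fin_cases i <;> simp [grad, cayleyCubic, pderiv_X, h2] <;> ring

theorem eval_steinerQuartic_smul_grad (t : ℂ) (x : Fin 4 → ℂ) :
    eval (t • grad cayleyCubic x) steinerQuartic =
      16 * t ^ 4 * eval x cayleyCubic * (x 1 * x 2 * x 3 ^ 3 + x 1 * x 2 ^ 3 * x 3
        + x 1 ^ 3 * x 2 * x 3 + 3 * x 0 ^ 2 * x 1 * x 2 * x 3
        - 2 * (x 0 * x 2 ^ 2 * x 3 ^ 2 + x 0 * x 1 ^ 2 * x 3 ^ 2 + x 0 * x 1 ^ 2 * x 2 ^ 2)) := by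
  simp only [grad_cayleyCubic, eval_steinerQuartic, eval_cayleyCubic, Matrix.smul_cons,
    smul_eq_mul, Matrix.smul_empty, Matrix.cons_val_zero, Matrix.cons_val_one, Matrix.cons_val]
  ring

theorem dualV_cayleyCubic_subset : dualV cayleyCubic ⊆ {y | eval y steinerQuartic = 0} := by
  intro y hy
  refine hy steinerQuartic ?_
  rintro _ ⟨t, x, ⟨hfx, -⟩, rfl⟩
  rw [eval_steinerQuartic_smul_grad, hfx]
  ring

noncomputable def steinerParam : Fin 4 → MvPolynomial (Fin 3) ℂ :=
  ![X 0 ^ 2 + X 1 ^ 2 + X 2 ^ 2, 2 * X 0 * X 1, 2 * X 0 * X 2, 2 * X 1 * X 2]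

/-- By Heron's formula this is `(w₀+w₁+w₂)(-w₀+w₁+w₂)(w₀-w₁+w₂)(w₀+w₁-w₂)`; it is written as the
pullback of `y₁² + y₂² + y₃² - y₀²` along `steinerParam`. -/
noncomputable def heron : MvPolynomial (Fin 3) ℂ :=
  (2 * X 0 * X 1) ^ 2 + (2 * X 0 * X 2) ^ 2 + (2 * X 1 * X 2) ^ 2 - (X 0 ^ 2 + X 1 ^ 2 + X 2 ^ 2) ^ 2

theorem heron_ne_zero : heron ≠ 0 := fun h => by
  have h1 := congrArg (eval fun _ => 1) h
  norm_num [heron] at h1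

/-- `cayleyCubic = det !![x₀, x₁, x₂; x₁, x₀, x₃; x₂, x₃, x₀]`, and this matrix has kernel `w` at
`cayleyPoint w`; there the adjugate, hence the gradient, is a multiple of `w wᵀ`. -/
def cayleyPoint (w : Fin 3 → ℂ) : Fin 4 → ℂ :=
  ![2 * w 0 * w 1 * w 2, w 2 * (w 2 ^ 2 - w 0 ^ 2 - w 1 ^ 2), -w 1 * (w 0 ^ 2 - w 1 ^ 2 + w 2 ^ 2),
    -w 0 * (w 1 ^ 2 - w 0 ^ 2 + w 2 ^ 2)]

theorem eval_cayleyCubic_cayleyPoint (w : Fin 3 → ℂ) : eval (cayleyPoint w) cayleyCubic = 0 := by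
  simp only [eval_cayleyCubic, cayleyPoint, Matrix.cons_val_zero, Matrix.cons_val_one,
    Matrix.cons_val]
  ring

theorem grad_cayleyCubic_cayleyPoint (w : Fin 3 → ℂ) :
    grad cayleyCubic (cayleyPoint w) = eval w heron • fun i => eval w (steinerParam i) := by
  funext i
  fin_cases i <;> simp [grad_cayleyCubic, cayleyPoint, heron, steinerParam] <;> ring

theorem eval_steinerParam_ne_zero {w : Fin 3 → ℂ} (hw : eval w heron ≠ 0) :
    (fun i => eval w (steinerParam i)) ≠ 0 := by
  intro h
  apply hw
  have hs : ∀ i, eval w (steinerParam i) = 0 := congrFun h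
  have hheron : eval w heron = eval w (steinerParam 1) ^ 2 + eval w (steinerParam 2) ^ 2
      + eval w (steinerParam 3) ^ 2 - eval w (steinerParam 0) ^ 2 := by
    simp [heron, steinerParam]
  simp [hheron, hs]

theorem eval_steinerParam_mem_dualV (w : Fin 3 → ℂ) :
    (fun i => eval w (steinerParam i)) ∈ dualV cayleyCubic := by
  refine eval_mem_zclosure_of_forall_eval_ne_zero _ heron_ne_zero (fun w hw => ?_) w
  refine ⟨(eval w heron)⁻¹, cayleyPoint w, ⟨eval_cayleyCubic_cayleyPoint w, ?_⟩, ?_⟩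
  · rw [grad_cayleyCubic_cayleyPoint]
    exact smul_ne_zero hw (eval_steinerParam_ne_zero hw)
  · rw [grad_cayleyCubic_cayleyPoint, inv_smul_smul₀ hw]

theorem exists_sq_add_sq_eq_and_two_mul_eq (S P : ℂ) :
    ∃ b c : ℂ, b ^ 2 + c ^ 2 = S ∧ 2 * b * c = P := by
  obtain ⟨u, hu⟩ := IsAlgClosed.exists_pow_nat_eq (S + P) two_pos
  obtain ⟨v, hv⟩ := IsAlgClosed.exists_pow_nat_eq (S - P) two_pos
  exact ⟨(u + v) / 2, (u - v) / 2, by linear_combination (hu + hv) / 2,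
    by linear_combination (hu - hv) / 2⟩

theorem exists_steiner_coords_of_ne_zero {y : Fin 4 → ℂ}
    (hy : y 1 ^ 2 * y 2 ^ 2 - 2 * y 0 * y 1 * y 2 * y 3 + y 1 ^ 2 * y 3 ^ 2 + y 2 ^ 2 * y 3 ^ 2 = 0)
    (h1 : y 1 ≠ 0) (h2 : y 2 ≠ 0) (h3 : y 3 ≠ 0) :
    ∃ a b c : ℂ, a ^ 2 + b ^ 2 + c ^ 2 = y 0 ∧ 2 * a * b = y 1 ∧ 2 * a * c = y 2 ∧
      2 * b * c = y 3 := by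
  obtain ⟨a, ha⟩ := IsAlgClosed.exists_pow_nat_eq (y 1 * y 2 / (2 * y 3)) two_pos
  have ha' : 2 * y 3 * a ^ 2 = y 1 * y 2 := by
    rw [ha]
    field_simp
  have ha0 : a ≠ 0 := by
    rintro rfl
    exact mul_ne_zero h1 h2 (by linear_combination -ha')
  have hy0 : 4 * a ^ 2 * y 0 = 4 * a ^ 4 + y 1 ^ 2 + y 2 ^ 2 :=
    mul_left_cancel₀ (pow_ne_zero 2 h3) <| by
      linear_combination -hy + (2 * y 0 * y 3 - 2 * a ^ 2 * y 3 - y 1 * y 2) * ha'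
  refine ⟨a, y 1 / (2 * a), y 2 / (2 * a), ?_, by field_simp, by field_simp, ?_⟩
  · field_simp
    linear_combination -hy0
  · field_simp
    linear_combination -ha'

theorem exists_eval_steinerParam_eq {y : Fin 4 → ℂ} (hy : eval y steinerQuartic = 0) :
    ∃ w : Fin 3 → ℂ, (fun i => eval w (steinerParam i)) = y := by
  suffices ∃ a b c : ℂ, a ^ 2 + b ^ 2 + c ^ 2 = y 0 ∧ 2 * a * b = y 1 ∧ 2 * a * c = y 2 ∧
      2 * b * c = y 3 by
    obtain ⟨a, b, c, h0, h1, h2, h3⟩ := this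
    refine ⟨![a, b, c], funext fun i => ?_⟩
    fin_cases i <;> simp [steinerParam, ← h0, ← h1, ← h2, ← h3]
  rw [eval_steinerQuartic] at hy
  by_cases h1 : y 1 = 0
  · have h23 : y 2 * y 3 = 0 := pow_eq_zero_iff two_ne_zero |>.mp <| by
      rw [h1] at hy; linear_combination hy
    rcases mul_eq_zero.mp h23 with h2 | h3
    · obtain ⟨b, c, hbc, hP⟩ := exists_sq_add_sq_eq_and_two_mul_eq (y 0) (y 3)
      exact ⟨0, b, c, by linear_combination hbc, by simp [h1], by simp [h2], hP⟩
    · obtain ⟨a, c, hac, hP⟩ := exists_sq_add_sq_eq_and_two_mul_eq (y 0) (y 2)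
      exact ⟨a, 0, c, by linear_combination hac, by simp [h1], hP, by simp [h3]⟩
  by_cases h2 : y 2 = 0
  · have h3 : y 3 = 0 := by
      have : y 1 * y 3 = 0 := pow_eq_zero_iff two_ne_zero |>.mp <| by
        rw [h2] at hy; linear_combination hy
      exact (mul_eq_zero.mp this).resolve_left h1
    obtain ⟨a, b, hab, hP⟩ := exists_sq_add_sq_eq_and_two_mul_eq (y 0) (y 1)
    exact ⟨a, b, 0, by linear_combination hab, hP, by simp [h2], by simp [h3]⟩
  by_cases h3 : y 3 = 0
  · have : y 1 * y 2 = 0 := pow_eq_zero_iff two_ne_zero |>.mp <| by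
      rw [h3] at hy; linear_combination hy
    exact absurd this (mul_ne_zero h1 h2)
  exact exists_steiner_coords_of_ne_zero hy h1 h2 h3

/-- The dual variety of Cayley's cubic `V(x₁³ - x₁x₂² - x₁x₃² + 2x₂x₃x₄ - x₁x₄²)` is the
quartic Steiner surface `V(x₂²x₃² - 2x₁x₂x₃x₄ + x₂²x₄² + x₃²x₄²)`. -/
theorem dual_cayley_cubic :
    dualV (X 0 ^ 3 - X 0 * X 1 ^ 2 - X 0 * X 2 ^ 2 + 2 * X 1 * X 2 * X 3 - X 0 * X 3 ^ 2 :
        MvPolynomial (Fin 4) ℂ) =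
      {y : Fin 4 → ℂ |
        y 1 ^ 2 * y 2 ^ 2 - 2 * y 0 * y 1 * y 2 * y 3 + y 1 ^ 2 * y 3 ^ 2 + y 2 ^ 2 * y 3 ^ 2
          = 0} := by
  change dualV cayleyCubic = _
  refine Set.Subset.antisymm (fun y hy => ?_) (fun y hy => ?_)
  · simpa [eval_steinerQuartic] using dualV_cayleyCubic_subset hy
  · obtain ⟨w, rfl⟩ := exists_eval_steinerParam_eq (y := y) (by rwa [eval_steinerQuartic])
    exact eval_steinerParam_mem_dualV w
end
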